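/- arXiv:2508.11973 — 3 statements merged into one kernel-verified Lean document; each statement's English description precedes it below -/
import Mathlib

section
/- Let Z be the free abelian group with basis {z_i : i ∈ ℤ}. For a finite abelian group context, let A be an abelian group and for even m and odd n define f_{m,n} : Z → ⟨a_n⟩ by f_{m,n}(z) = a_n^{k}, where k is the exponent of z_m in the canonical decomposition of z, and let f̃_n : Z → ⟨a_n⟩ be the constant function with value a_n. Then in the group of functions Z → A with pointwise multiplication, extended by the translation action of Z (i.e., inside the unrestricted wreath product A Wr Z), for even k, m, odd n, and all integers p, q, the commutator [z_k^p, (f_{m,n})^q] equals 1 if k ≠ m, and equals (f̃_n)^{pq} if k = m. -/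
/- The free abelian group `Z` with basis `{z_i : i ∈ ℤ}`, realized as `ℤ →₀ ℤ`
   (with `z i = Finsupp.single i 1`), and the unrestricted wreath product
   `A Wr Z`, realized as the semidirect product of the group of functions
   `Z → A` (pointwise multiplication) with `Multiplicative Z`, acting by
   `(z' • f) z = f (z + z')`. -/

abbrev ZB : Type := ℤ →₀ ℤ

/-- The shift automorphism `f ↦ (z ↦ f (z + t))` of the group of functions `Z → A`. -/
noncomputable def shiftEquiv {A : Type*} [CommGroup A] (t : ZB) : (ZB → A) ≃* (ZB → A) where
  toFun f := fun z => f (z + t)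
  invFun f := fun z => f (z - t)
  left_inv f := by funext z; simp
  right_inv f := by funext z; simp
  map_mul' f g := rfl

/-- The translation action of `Z` on `Z → A`. -/
noncomputable def wAct (A : Type*) [CommGroup A] : Multiplicative ZB →* MulAut (ZB → A) where
  toFun t := shiftEquiv (Multiplicative.toAdd t)
  map_one' := by
    apply MulEquiv.ext; intro f; funext z; simp [shiftEquiv]
  map_mul' x y := by
    apply MulEquiv.ext; intro f; funext z; simp [shiftEquiv, add_assoc]

/-- The unrestricted wreath product `A Wr Z`. -/
abbrev WreathZ (A : Type*) [CommGroup A] : Type _ :=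
  SemidirectProduct (ZB → A) (Multiplicative ZB) (wAct A)

/-- The basis element `z_k` of `Z`, viewed inside `A Wr Z`. -/
noncomputable def zElt (A : Type*) [CommGroup A] (k : ℤ) : WreathZ A :=
  SemidirectProduct.inr (Multiplicative.ofAdd (Finsupp.single k 1))

/-- `f_{m,n} : Z → ⟨a_n⟩`, `f_{m,n}(z) = a_n ^ |z|_{z_m}`. -/
def fmn {A : Type*} [CommGroup A] (a : ℤ → A) (m n : ℤ) : ZB → A :=
  fun z => a n ^ (z m)

/-- The constant function `f̃_n : Z → ⟨a_n⟩` with value `a_n`. -/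
def ftil {A : Type*} [CommGroup A] (a : ℤ → A) (n : ℤ) : ZB → A :=
  fun _ => a n

open scoped commutatorElement

/-! Conjugating by `z_k^p` shifts a function `Z → A` by `p z_k`, so the commutator
`[z_k^p, f]` is the function `z ↦ f (z + p z_k) f (z)⁻¹`. For `f = f_{m,n}^q`, which is a
homomorphism `Z → A`, this quotient is the constant `f (p z_k) = a_n ^ (p q |z_k|_{z_m})`,
and `|z_k|_{z_m}` is `1` or `0` according as `k = m` or not. -/

theorem SemidirectProduct.commutatorElement_inr_inl {N G : Type*} [Group N] [Group G]
    {φ : G →* MulAut N} (g : G) (n : N) :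
    ⁅(inr g : N ⋊[φ] G), (inl n : N ⋊[φ] G)⁆ = inl (φ g n * n⁻¹) := by
  rw [commutatorElement_def, map_mul, inl_aut, map_inv, map_inv]

section

variable {A : Type*} [CommGroup A]

theorem wAct_apply (t : Multiplicative ZB) (f : ZB → A) (z : ZB) :
    wAct A t f z = f (z + t.toAdd) :=
  rfl

theorem wAct_mul_inv_of_map_add (t : Multiplicative ZB)
    {χ : ZB → A} (hχ : ∀ x y, χ (x + y) = χ x * χ y) :
    wAct A t χ * χ⁻¹ = fun _ => χ t.toAdd := by
  funext z
  rw [Pi.mul_apply, Pi.inv_apply, wAct_apply, hχ, mul_inv_cancel_comm]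

theorem zElt_zpow (k p : ℤ) :
    zElt A k ^ p = SemidirectProduct.inr (Multiplicative.ofAdd (Finsupp.single k p)) := by
  rw [zElt, ← map_zpow, ← ofAdd_zsmul, Finsupp.smul_single, smul_eq_mul, mul_one]

theorem fmn_zpow_apply (a : ℤ → A) (m n q : ℤ) (z : ZB) :
    (fmn a m n ^ q) z = a n ^ (z m * q) := by
  rw [Pi.pow_apply, fmn, zpow_mul]

theorem fmn_zpow_map_add (a : ℤ → A) (m n q : ℤ) (x y : ZB) :
    (fmn a m n ^ q) (x + y) = (fmn a m n ^ q) x * (fmn a m n ^ q) y := by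
  simp only [fmn_zpow_apply, Finsupp.add_apply, add_mul, zpow_add]

end

theorem commutator_zpow_fmn_general {A : Type*} [CommGroup A] (a : ℤ → A)
    (k m n : ℤ) (p q : ℤ) :
    ⁅(zElt A k) ^ p, (SemidirectProduct.inl (fmn a m n) : WreathZ A) ^ q⁆ =
      if k = m then (SemidirectProduct.inl (ftil a n) : WreathZ A) ^ (p * q)
      else 1 := by
  rw [zElt_zpow, ← map_zpow, SemidirectProduct.commutatorElement_inr_inl,
    wAct_mul_inv_of_map_add _ (fmn_zpow_map_add a m n q), toAdd_ofAdd]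
  split_ifs with hkm
  · subst hkm
    rw [← map_zpow]
    congr 1
    funext z
    rw [fmn_zpow_apply, Finsupp.single_eq_same, Pi.pow_apply, ftil, zpow_mul]
  · rw [← map_one SemidirectProduct.inl]
    congr 1
    funext z
    rw [fmn_zpow_apply, Finsupp.single_eq_of_ne (Ne.symm hkm), zero_mul, zpow_zero, Pi.one_apply]

/-- Property 2.1. For even `k, m`, odd `n` and all integers
`p, q`, inside `A Wr Z` one has `[z_k^p, (f_{m,n})^q] = 1` if `k ≠ m` and
`[z_k^p, (f_{m,n})^q] = (f̃_n)^{pq}` if `k = m`. -/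
theorem commutator_zpow_fmn {A : Type*} [CommGroup A] (a : ℤ → A)
    (k m n : ℤ) (hk : Even k) (hm : Even m) (hn : Odd n) (p q : ℤ) :
    ⁅(zElt A k) ^ p, (SemidirectProduct.inl (fmn a m n) : WreathZ A) ^ q⁆ =
      if k = m then (SemidirectProduct.inl (ftil a n) : WreathZ A) ^ (p * q)
      else 1 :=
  commutator_zpow_fmn_general a k m n p q
end

section
/- Let L_p = (ℤ/pℤ) wr ℤ be the lamplighter group, the restricted wreath product of the cyclic group of order p by ℤ, generated by a (a generator of the base copy of ℤ/pℤ at position 0) and b (the generator of the acting ℤ). Then the residual finiteness growth function of L_p with respect to {a, b} satisfies rf_{L_p,{a,b}}(n) ≤ 4 p² (n+1)². -/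
/-- The shift by `t` on the base group `⊕_{i ∈ ℤ} ℤ/pℤ` of the lamplighter
group, as a multiplicative automorphism. -/
noncomputable def lampShift (p : ℕ) (t : ℤ) :
    Multiplicative (ℤ →₀ ZMod p) ≃* Multiplicative (ℤ →₀ ZMod p) :=
  AddEquiv.toMultiplicative (Finsupp.domCongr (Equiv.addRight t).symm)

/-- The shift action of `ℤ` on the base group of the lamplighter group. -/
noncomputable def lampAct (p : ℕ) :
    Multiplicative ℤ →* MulAut (Multiplicative (ℤ →₀ ZMod p)) where
  toFun t := lampShift p (Multiplicative.toAdd t)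
  map_one' := by
    apply MulEquiv.ext; intro f
    apply Multiplicative.toAdd.injective
    ext i
    simp [lampShift]
  map_mul' x y := by
    apply MulEquiv.ext; intro f
    apply Multiplicative.toAdd.injective
    ext i
    simp [lampShift, add_assoc]

/-- The lamplighter group `L_p = (ℤ/pℤ) wr ℤ`, the restricted wreath product of
the cyclic group of order `p` by `ℤ`. -/
abbrev Lamp (p : ℕ) : Type :=
  SemidirectProduct (Multiplicative (ℤ →₀ ZMod p)) (Multiplicative ℤ) (lampAct p)

/-- The generator `a` of `L_p`: the base element supported at `0` with value `1`. -/
noncomputable def lampA (p : ℕ) : Lamp p :=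
  SemidirectProduct.inl (Multiplicative.ofAdd (Finsupp.single (0 : ℤ) (1 : ZMod p)))

/-- The generator `b` of `L_p`: the generator of the acting copy of `ℤ`. -/
noncomputable def lampB (p : ℕ) : Lamp p :=
  SemidirectProduct.inr (Multiplicative.ofAdd (1 : ℤ))

/-- The residual finiteness depth of `g`: the least index of a finite-index
normal subgroup of `G` not containing `g` (and `0` if none exists). -/
noncomputable def rfDepth {G : Type*} [Group G] (g : G) : ℕ :=
  sInf { d : ℕ | d ≠ 0 ∧ ∃ N : Subgroup G, N.Normal ∧ g ∉ N ∧ N.index = d }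

/-- Word length of `g` with respect to a generating set `X` (using `X ∪ X⁻¹`). -/
noncomputable def wordLength {G : Type*} [Group G] (X : Set G) (g : G) : ℕ :=
  sInf { n : ℕ | ∃ l : List G, (∀ x ∈ l, x ∈ X ∨ x⁻¹ ∈ X) ∧ l.length = n ∧ l.prod = g }

/-- The residual finiteness growth function `rf_{G,X}`. -/
noncomputable def rfGrowth {G : Type*} [Group G] (X : Set G) (n : ℕ) : ℕ :=
  sSup { d : ℕ | ∃ g : G, g ≠ 1 ∧ wordLength X g ≤ n ∧ rfDepth g = d }

/-- `G` is residually finite. -/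
def ResiduallyFinite (G : Type*) [Group G] : Prop :=
  ∀ g : G, g ≠ 1 → ∃ N : Subgroup G, N.Normal ∧ N.index ≠ 0 ∧ g ∉ N

/-!
A word of length `m` in `a, b` never moves the cursor more than `m` steps from the origin, so the
element it represents has its cursor and all its lit lamps in `[-m, m]`. If the cursor of `g ≠ 1`
is displaced, reducing it mod `n + 1` detects `g`. Otherwise the lamps of `g` form a nonzero Laurent
polynomial `P` with exponents in `[-n, n]`. Take the field `F` with `q = pᵏ` elements, where
`2n + 1 < q ≤ 2p(n + 1)`: since `Xⁿ P` has at most `2n` roots, `P(u) ≠ 0` for some `u ∈ Fˣ`. Letting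
`L_p` act on `F` by the affine maps `x ↦ P(u) + u⁻ᵗ x` gives a quotient of order at most `q²` in
which `g` survives.
-/

section General

variable {G : Type*} [Group G]

theorem rfDepth_le_index {N : Subgroup G} [N.Normal] {g : G} (hg : g ∉ N) (hN : N.index ≠ 0) :
    rfDepth g ≤ N.index :=
  Nat.sInf_le ⟨hN, N, inferInstance, hg, rfl⟩

theorem rfDepth_le_card_of_map_ne_one {H : Type*} [Group H] [Finite H] (φ : G →* H) {g : G}
    (hg : φ g ≠ 1) : rfDepth g ≤ Nat.card H := by
  have hidx : φ.ker.index = Nat.card φ.range := Subgroup.index_ker φ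
  calc rfDepth g ≤ φ.ker.index := rfDepth_le_index hg (hidx ▸ Nat.card_pos.ne')
    _ ≤ Nat.card H := hidx ▸ Subgroup.card_le_card_group _

theorem rfDepth_le_of_map_int_ne_one (φ : G →* Multiplicative ℤ) {g : G} {n : ℕ} (hg : φ g ≠ 1)
    (hn : |Multiplicative.toAdd (φ g)| ≤ n) : rfDepth g ≤ n + 1 := by
  let ψ := (Int.castAddHom (ZMod (n + 1))).toMultiplicative.comp φ
  have hψ : ψ g ≠ 1 := fun h => by
    have hdvd : ((n + 1 : ℕ) : ℤ) ∣ Multiplicative.toAdd (φ g) :=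
      (ZMod.intCast_zmod_eq_zero_iff_dvd _ _).1 (congrArg Multiplicative.toAdd h)
    exact hg (Multiplicative.toAdd.injective (Int.eq_zero_of_abs_lt_dvd hdvd (by omega)))
  simpa [Nat.card_zmod] using rfDepth_le_card_of_map_ne_one ψ hψ

theorem rfGrowth_le_of_forall (X : Set G) {n B : ℕ}
    (h : ∀ g : G, g ≠ 1 → wordLength X g ≤ n → rfDepth g ≤ B) : rfGrowth X n ≤ B :=
  csSup_le' <| by
    rintro _ ⟨g, hg, hgn, rfl⟩
    exact h g hg hgn

theorem exists_list_length_eq_wordLength {X : Set G} {g : G} (hg : g ∈ Subgroup.closure X) :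
    ∃ l : List G, (∀ x ∈ l, x ∈ X ∨ x⁻¹ ∈ X) ∧ l.length = wordLength X g ∧ l.prod = g := by
  have hg' : g ∈ Submonoid.closure (X ∪ X⁻¹) := by rwa [← Subgroup.closure_toSubmonoid]
  obtain ⟨l, hl, hlg⟩ := Submonoid.exists_list_of_mem_closure hg'
  have hne :
      {m | ∃ l : List G, (∀ x ∈ l, x ∈ X ∨ x⁻¹ ∈ X) ∧ l.length = m ∧ l.prod = g}.Nonempty :=
    ⟨l.length, l, hl, rfl, hlg⟩
  exact Nat.sInf_mem hne

end General

instance SemidirectProduct.instFinite {N H : Type*} [Group N] [Group H] {φ : H →* MulAut N}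
    [Finite N] [Finite H] : Finite (N ⋊[φ] H) :=
  Finite.of_equiv _ SemidirectProduct.equivProd.symm

theorem Nat.exists_pow_lt_le_mul {b m : ℕ} (hb : 1 < b) (hm : m ≠ 0) :
    ∃ k, m < b ^ k ∧ b ^ k ≤ b * m :=
  ⟨Nat.log b m + 1, Nat.lt_pow_succ_log_self hb m,
    by rw [pow_succ']; exact Nat.mul_le_mul_left b (Nat.pow_log_le_self b hm)⟩

section LaurentEval

open Polynomial

theorem linearCombination_zpow_domCongr_addRight {K F : Type*} [CommSemiring K] [CommRing F]
    [Algebra K F] (u : Fˣ) (t : ℤ) (f : ℤ →₀ K) :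
    Finsupp.linearCombination K (fun i => ((u ^ i : Fˣ) : F))
        (Finsupp.domCongr (Equiv.addRight t).symm f) =
      ((u ^ (-t) : Fˣ) : F) * Finsupp.linearCombination K (fun i => ((u ^ i : Fˣ) : F)) f := by
  rw [Finsupp.domCongr_apply, Finsupp.linearCombination_equivMapDomain,
    Finsupp.linearCombination_apply, Finsupp.linearCombination_apply, Finsupp.mul_sum]
  refine Finsupp.sum_congr fun i _ => ?_
  simp only [Function.comp_apply, Equiv.addRight_symm, Equiv.coe_addRight, ← sub_eq_add_neg,
    zpow_sub, zpow_neg, Units.val_mul, mul_smul_comm, mul_comm]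

variable {K F : Type*} [Field K] [Field F] [Algebra K F]

theorem exists_linearCombination_zpow_ne_zero [Finite F] {f : ℤ →₀ K} (hf : f ≠ 0) {n : ℕ}
    (hsupp : ∀ i ∈ f.support, |i| ≤ n) (hcard : 2 * n + 1 < Nat.card F) :
    ∃ u : Fˣ, Finsupp.linearCombination K (fun i => ((u ^ i : Fˣ) : F)) f ≠ 0 := by
  classical
  have := Fintype.ofFinite F
  have hshift (i) (hi : i ∈ f.support) : ((i + n).toNat : ℤ) = i + n :=
    Int.toNat_of_nonneg (by linarith [(abs_le.1 (hsupp i hi)).1])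
  -- `Q = Xⁿ * ∑ fᵢ Xⁱ` is a nonzero polynomial of degree `≤ 2n < #Fˣ`, so it cannot vanish on `Fˣ`.
  set Q : F[X] := ∑ i ∈ f.support, monomial (i + n).toNat (algebraMap K F (f i))
  have hQ_eval (u : Fˣ) :
      Q.eval (u : F) =
        (u : F) ^ n * Finsupp.linearCombination K (fun i => ((u ^ i : Fˣ) : F)) f := by
    rw [eval_finsetSum, Finsupp.linearCombination_apply, Finsupp.sum, Finset.mul_sum]
    refine Finset.sum_congr rfl fun i hi => ?_
    rw [eval_monomial, Algebra.smul_def, ← zpow_natCast, hshift i hi, Units.val_zpow_eq_zpow_val,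
      zpow_add₀ u.ne_zero, zpow_natCast]
    ring
  obtain ⟨i₀, hi₀⟩ := Finsupp.support_nonempty_iff.2 hf
  have hQ_coeff : Q.coeff (i₀ + n).toNat = algebraMap K F (f i₀) := by
    rw [finsetSum_coeff, Finset.sum_eq_single i₀ (fun i hi hne => ?_) (absurd hi₀),
      coeff_monomial, if_pos rfl]
    rw [coeff_monomial, if_neg]
    have := abs_le.1 (hsupp i hi)
    have := abs_le.1 (hsupp i₀ hi₀)
    omega
  have hQ : Q ≠ 0 := fun h => by
    rw [h, coeff_zero, eq_comm, FaithfulSMul.algebraMap_eq_zero_iff] at hQ_coeff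
    exact Finsupp.mem_support_iff.1 hi₀ hQ_coeff
  have hQ_deg : Q.natDegree < Fintype.card Fˣ := by
    rw [← Nat.card_eq_fintype_card, Nat.card_units]
    refine lt_of_le_of_lt (natDegree_sum_le_of_forall_le _ _ fun i hi => ?_) (by omega : 2 * n < _)
    refine (natDegree_monomial_le _).trans ?_
    have := abs_le.1 (hsupp i hi)
    omega
  by_contra! h
  exact hQ (eq_zero_of_natDegree_lt_card_of_eval_eq_zero Q Units.val_injective
    (fun u => by rw [hQ_eval, h u, mul_zero]) hQ_deg)

end LaurentEval

open SemidirectProduct Multiplicative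

/-- `Multiplicative R ⋊[mulAutOfUnits R] Rˣ` is the affine group `x ↦ a + u * x` of `R`. -/
def mulAutOfUnits (R : Type*) [Ring R] : Rˣ →* MulAut (Multiplicative R) where
  toFun u := AddEquiv.toMultiplicative (DistribMulAction.toAddEquiv R u)
  map_one' := by ext; simp
  map_mul' _ _ := by ext; simp [mul_smul]

theorem card_semidirectProduct_mulAutOfUnits_le (R : Type*) [Ring R] [Finite R] :
    Nat.card (Multiplicative R ⋊[mulAutOfUnits R] Rˣ) ≤ Nat.card R ^ 2 := by
  rw [SemidirectProduct.card, sq, Nat.card_congr toAdd]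
  exact Nat.mul_le_mul_left _ (Nat.card_le_card_of_injective _ Units.val_injective)

namespace Lamp

variable {p : ℕ}

theorem closure_lampA_lampB : Subgroup.closure ({lampA p, lampB p} : Set (Lamp p)) = ⊤ := by
  set H := Subgroup.closure ({lampA p, lampB p} : Set (Lamp p))
  have hb (t : Multiplicative ℤ) : (inr t : Lamp p) ∈ H := by
    have : (inr t : Lamp p) = lampB p ^ toAdd t := by
      rw [lampB, ← map_zpow, ← ofAdd_zsmul, smul_eq_mul, mul_one, ofAdd_toAdd]
    exact this ▸ zpow_mem (Subgroup.subset_closure (by simp)) _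
  have ha (c : ZMod p) : (inl (ofAdd (Finsupp.single 0 c)) : Lamp p) ∈ H := by
    obtain ⟨k, rfl⟩ := ZMod.intCast_surjective c
    have : (inl (ofAdd (Finsupp.single 0 (k : ZMod p))) : Lamp p) = lampA p ^ k := by
      rw [lampA, ← map_zpow, ← ofAdd_zsmul, Finsupp.smul_single, zsmul_one]
    exact this ▸ zpow_mem (Subgroup.subset_closure (by simp)) _
  have hai (i : ℤ) (c : ZMod p) : (inl (ofAdd (Finsupp.single i c)) : Lamp p) ∈ H := by
    have : lampAct p (ofAdd (-i)) (ofAdd (Finsupp.single 0 c)) = ofAdd (Finsupp.single i c) := by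
      ext j
      simp [lampAct, lampShift]
    rw [← this, inl_aut]
    exact mul_mem (mul_mem (hb _) (ha c)) (hb _)
  have hl (f : ℤ →₀ ZMod p) : (inl (ofAdd f) : Lamp p) ∈ H := by
    induction f using Finsupp.induction with
    | zero => exact H.one_mem
    | single_add i c f _ _ ih =>
      rw [ofAdd_add, map_mul]
      exact mul_mem (hai i c) ih
  refine eq_top_iff.2 fun g _ => ?_
  rw [← inl_left_mul_inr_right g]
  exact mul_mem (hl _) (hb _)

def InBox (m : ℕ) (g : Lamp p) : Prop :=
  |toAdd g.right| ≤ m ∧ ∀ i ∈ (toAdd g.left).support, |i| ≤ m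

theorem InBox.mono {m m' : ℕ} {g : Lamp p} (hg : InBox m g) (h : m ≤ m') : InBox m' g :=
  ⟨hg.1.trans (by exact_mod_cast h), fun i hi => (hg.2 i hi).trans (by exact_mod_cast h)⟩

theorem InBox.mul {m m' : ℕ} {g h : Lamp p} (hg : InBox m g) (hh : InBox m' h) :
    InBox (m + m') (g * h) := by
  refine ⟨?_, fun i hi => ?_⟩
  · rw [mul_right, toAdd_mul]
    push_cast
    exact (abs_add_le _ _).trans (add_le_add hg.1 hh.1)
  · rw [mul_left, toAdd_mul, Finsupp.mem_support_iff, Finsupp.add_apply] at hi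
    push_cast
    by_cases hgi : toAdd g.left i = 0
    · rw [hgi, zero_add] at hi
      have hh_i : |i + toAdd g.right| ≤ m' := hh.2 _ (Finsupp.mem_support_iff.2 hi)
      calc |i| = |i + toAdd g.right - toAdd g.right| := by rw [add_sub_cancel_right]
        _ ≤ |i + toAdd g.right| + |toAdd g.right| := abs_sub _ _
        _ ≤ m + m' := by linarith [hg.1]
    · linarith [hg.2 i (Finsupp.mem_support_iff.2 hgi)]

theorem inBox_one_of_mem {x : Lamp p}
    (hx : x ∈ ({lampA p, lampB p} : Set (Lamp p)) ∨
      x⁻¹ ∈ ({lampA p, lampB p} : Set (Lamp p))) :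
    InBox 1 x := by
  rcases hx with (rfl | rfl) | (h | h)
  · simp [InBox, lampA, Finsupp.single_apply_eq_zero]
  · simp [InBox, lampB]
  · rw [inv_eq_iff_eq_inv.1 h]
    simp [InBox, lampA, Finsupp.single_apply_eq_zero]
  · rw [inv_eq_iff_eq_inv.1 h]
    simp [InBox, lampB]

theorem InBox.list_prod {l : List (Lamp p)} (hl : ∀ x ∈ l, InBox 1 x) :
    InBox l.length l.prod := by
  induction l with
  | nil => simp [InBox]
  | cons x l ih =>
    rw [List.prod_cons, List.length_cons, add_comm]
    exact (hl x List.mem_cons_self).mul (ih fun y hy => hl y (List.mem_cons_of_mem x hy))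

theorem inBox_wordLength (g : Lamp p) : InBox (wordLength {lampA p, lampB p} g) g := by
  obtain ⟨l, hl, hlen, rfl⟩ :=
    exists_list_length_eq_wordLength (closure_lampA_lampB ▸ Subgroup.mem_top g)
  exact hlen ▸ InBox.list_prod fun x hx => inBox_one_of_mem (hl x hx)

section Affine

variable {F : Type*} [Field F] [Algebra (ZMod p) F]

/-- `(f, t) ↦ (x ↦ f(u) + u⁻ᵗ * x)`, where `f(u) = ∑ fᵢ uⁱ` evaluates the lamp
configuration, read as a Laurent polynomial, at `u`. -/
noncomputable def toAffine (u : Fˣ) : Lamp p →* Multiplicative F ⋊[mulAutOfUnits F] Fˣ :=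
  SemidirectProduct.map
    (AddMonoidHom.toMultiplicative
      (Finsupp.linearCombination (ZMod p) fun i => ((u ^ i : Fˣ) : F)).toAddMonoidHom)
    (zpowersHom Fˣ u⁻¹)
    fun t => by
      refine MonoidHom.ext fun f => toAdd.injective ?_
      refine (linearCombination_zpow_domCongr_addRight u (toAdd t) (toAdd f)).trans ?_
      rw [zpow_neg, ← inv_zpow]
      rfl

theorem rfDepth_le_of_left_ne_one (hp : p.Prime) {g : Lamp p} {n : ℕ} (hg : g.left ≠ 1)
    (hbox : ∀ i ∈ (toAdd g.left).support, |i| ≤ n) :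
    rfDepth g ≤ 4 * p ^ 2 * (n + 1) ^ 2 := by
  have := Fact.mk hp
  obtain ⟨k, hk_lt, hk_le⟩ := Nat.exists_pow_lt_le_mul hp.one_lt (2 * n).succ_ne_zero
  have hF : Nat.card (GaloisField p k) = p ^ k :=
    GaloisField.card p k (by rintro rfl; simp at hk_lt)
  obtain ⟨u, hu⟩ := exists_linearCombination_zpow_ne_zero (F := GaloisField p k)
    (fun h => hg (toAdd.injective h)) hbox (hF ▸ hk_lt)
  calc rfDepth g
        ≤ Nat.card (Multiplicative (GaloisField p k) ⋊[mulAutOfUnits _] (GaloisField p k)ˣ) :=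
          rfDepth_le_card_of_map_ne_one (toAffine u) fun h =>
            hu (congrArg (fun x => toAdd x.left) h)
    _ ≤ (p ^ k) ^ 2 := hF ▸ card_semidirectProduct_mulAutOfUnits_le _
    _ ≤ (2 * p * (n + 1)) ^ 2 := by gcongr; linarith
    _ = 4 * p ^ 2 * (n + 1) ^ 2 := by ring

end Affine

end Lamp

/-- Bou-Rabee et al.. The residual finiteness growth of the
lamplighter group `L_p` with respect to `{a, b}` satisfies
`rf_{L_p,{a,b}}(n) ≤ 4 p² (n+1)²`. -/
theorem lamplighter_rfGrowth_le (p : ℕ) (hp : p.Prime) (n : ℕ) :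
    rfGrowth ({lampA p, lampB p} : Set (Lamp p)) n ≤ 4 * p ^ 2 * (n + 1) ^ 2 := by
  refine rfGrowth_le_of_forall _ fun g hg hgn => ?_
  have hbox := (Lamp.inBox_wordLength g).mono hgn
  by_cases hleft : g.left = 1
  · have hright : g.right ≠ 1 := fun h => hg (SemidirectProduct.ext hleft h)
    calc rfDepth g ≤ n + 1 := rfDepth_le_of_map_int_ne_one rightHom hright hbox.1
      _ ≤ (n + 1) ^ 2 := Nat.le_self_pow two_ne_zero _
      _ ≤ 4 * p ^ 2 * (n + 1) ^ 2 := Nat.le_mul_of_pos_left _ (by have := hp.pos; positivity)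
  · exact Lamp.rfDepth_le_of_left_ne_one hp hleft hbox.2
end

section
/- Let G = ⟨X⟩ be a finitely generated residually finite group with recursively enumerable presentation, and suppose the word problem of G is decidable. Then the individual residual finiteness depth function ρ : (X ∪ X^{-1})* → ℕ is left-computable, i.e., the set { (w, k) : ρ(w) > k } is recursively enumerable. -/
/-- Evaluation of a word over the generators `X` (with `true` = generator,
`false` = inverse) in the group `G`. -/
def evalWord {G : Type*} [Group G] {m : ℕ} (X : Fin m → G)
    (w : List (Fin m × Bool)) : G :=
  (w.map fun p => if p.2 then X p.1 else (X p.1)⁻¹).prod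

/-- The individual residual finiteness depth function `ρ` of `G = ⟨X⟩`:
`ρ(w) = 1` if `w` represents the identity, and otherwise `ρ(w)` is the least
order of a finite quotient of `G` in which the element represented by `w`
survives (equivalently, the least index of a finite-index normal subgroup
avoiding it). -/
noncomputable def rhoDepth {G : Type*} [Group G] {m : ℕ} (X : Fin m → G)
    (w : List (Fin m × Bool)) : ℕ := by
  classical exact if evalWord X w = 1 then 1 else rfDepth (evalWord X w)
/-- `f : S → ℕ` is left-computable if `{ (s,k) | f s > k }` is recursively
enumerable (`RePred` is Mathlib's notion of a recursively enumerable predicate). -/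
def LeftComputable {α : Type*} [Primcodable α] (f : α → ℕ) : Prop :=
  REPred (fun x : α × ℕ => x.2 < f x.1)

/-! If `w ≠ 1`, then `k < ρ(w)` says that no quotient of `G` of order at most `k` detects `w`.
Groups of order at most `k` with `m` marked elements are given by finitely many multiplication
tables, and by von Dyck's theorem a marked table is a quotient of `G` exactly when every relator
of `G` vanishes in it. Hence `k < ρ(w)` holds iff each of these finitely many tables kills `w` or
violates some relator. A certificate is then a step count witnessing `w ≠ 1` (decidable word
problem) together with a finite list of relators, each with a step count witnessing that it is a
relator, and checking a certificate is primitive recursive. -/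

section Words

variable {G H : Type*} [Group G] [Group H] {m : ℕ}

theorem map_evalWord (φ : G →* H) (X : Fin m → G) (w : List (Fin m × Bool)) :
    φ (evalWord X w) = evalWord (fun i => φ (X i)) w := by
  simp only [evalWord, map_list_prod, List.map_map]
  congr 1
  refine List.map_congr_left fun ⟨i, b⟩ _ => ?_
  cases b <;> simp

theorem FreeGroup.lift_mk_eq_evalWord (X : Fin m → G) (w : List (Fin m × Bool)) :
    FreeGroup.lift X (FreeGroup.mk w) = evalWord X w := by
  rw [FreeGroup.lift_mk, evalWord]
  congr 1
  refine List.map_congr_left fun ⟨i, b⟩ _ => ?_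
  cases b <;> rfl

/-- Von Dyck's theorem. -/
theorem exists_monoidHom_evalWord {X : Fin m → G}
    (hgen : Subgroup.closure (Set.range X) = ⊤) (f : Fin m → H)
    (hf : ∀ u, evalWord X u = 1 → evalWord f u = 1) :
    ∃ φ : G →* H, ∀ w, φ (evalWord X w) = evalWord f w := by
  have hsurj : Function.Surjective (FreeGroup.lift X) := by
    rw [← MonoidHom.range_eq_top, FreeGroup.range_lift_eq_closure, hgen]
  have hker : (FreeGroup.lift X).ker ≤ (FreeGroup.lift f).ker := by
    intro x hx
    rw [MonoidHom.mem_ker, ← FreeGroup.mk_toWord (x := x), FreeGroup.lift_mk_eq_evalWord] at hx ⊢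
    exact hf _ hx
  refine ⟨(FreeGroup.lift X).liftOfSurjective hsurj ⟨_, hker⟩, fun w => ?_⟩
  rw [← FreeGroup.lift_mk_eq_evalWord X, MonoidHom.liftOfRightInverse_comp_apply,
    FreeGroup.lift_mk_eq_evalWord]

theorem exists_normal_index_le_evalWord_not_mem [Finite H] {X : Fin m → G}
    (hgen : Subgroup.closure (Set.range X) = ⊤) (f : Fin m → H)
    (hf : ∀ u, evalWord X u = 1 → evalWord f u = 1) {w : List (Fin m × Bool)}
    (hw : evalWord f w ≠ 1) :
    ∃ N : Subgroup G, N.Normal ∧ N.index ≠ 0 ∧ N.index ≤ Nat.card H ∧ evalWord X w ∉ N := by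
  obtain ⟨φ, hφ⟩ := exists_monoidHom_evalWord hgen f hf
  refine ⟨φ.ker, φ.normal_ker, ?_, ?_, ?_⟩
  · rw [Subgroup.index_ker]
    exact Nat.card_pos.ne'
  · rw [Subgroup.index_ker]
    exact φ.range.card_le_card_group
  · rwa [MonoidHom.mem_ker, hφ]

end Words

def tuples (b : ℕ) : ℕ → List (List ℕ)
  | 0 => [[]]
  | n + 1 => (List.range b).flatMap fun x => (tuples b n).map (x :: ·)

theorem mem_tuples {b n : ℕ} {l : List ℕ} : l ∈ tuples b n ↔ l.length = n ∧ ∀ x ∈ l, x < b := by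
  induction n generalizing l with
  | zero => cases l <;> simp [tuples]
  | succ n ih =>
    cases l with
    | nil => simp [tuples]
    | cons x l => simp [tuples, ih, and_assoc, and_left_comm]

/-- `(d, t)` encodes the operation `a * b = t[a * d + b]` on `{0, …, d - 1}`, with `0` as the
intended identity. -/
abbrev MulTable := ℕ × List ℕ

namespace MulTable

variable {m : ℕ}

def mul (T : MulTable) (a b : ℕ) : ℕ := T.2.getD (a * T.1 + b) 0

/-- In a group of order `d`, `a⁻¹ = a ^ (d - 1)`. -/
def inv (T : MulTable) (a : ℕ) : ℕ := (T.mul · a)^[T.1 - 1] 0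

def eval (T : MulTable) (g : List ℕ) (w : List (Fin m × Bool)) : ℕ :=
  (w.map fun p => if p.2 then g.getD p.1 0 else T.inv (g.getD p.1 0)).foldl T.mul 0

def IsGroup (T : MulTable) : Prop :=
  0 < T.1 ∧ T.2.length = T.1 * T.1 ∧ (∀ x ∈ T.2, x < T.1) ∧
    ∀ a < T.1, T.mul 0 a = a ∧ (∃ b < T.1, T.mul b a = 0) ∧
      ∀ b < T.1, ∀ c < T.1, T.mul (T.mul a b) c = T.mul a (T.mul b c)

instance : DecidablePred IsGroup := fun T => by unfold IsGroup; infer_instance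

def groupTables (m k : ℕ) : List (MulTable × List ℕ) :=
  ((List.range (k + 1)).flatMap fun d => (tuples d (d * d)).flatMap fun t =>
    (tuples d m).map fun g => ((d, t), g)).filter fun c => c.1.IsGroup

theorem mem_groupTables {k : ℕ} {c : MulTable × List ℕ} :
    c ∈ groupTables m k ↔
      c.1.IsGroup ∧ c.1.1 ≤ k ∧ c.2.length = m ∧ ∀ x ∈ c.2, x < c.1.1 := by
  obtain ⟨⟨d, t⟩, g⟩ := c
  simp only [groupTables, List.mem_filter, List.mem_flatMap, List.mem_range, List.mem_map,
    Prod.mk.injEq, mem_tuples, decide_eq_true_eq]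
  constructor
  · rintro ⟨⟨d, hd, t, -, g, hg, ⟨rfl, rfl⟩, rfl⟩, hT⟩
    exact ⟨hT, by omega, hg⟩
  · rintro ⟨hT, hd, hg⟩
    exact ⟨⟨d, by omega, t, ⟨hT.2.1, hT.2.2.1⟩, g, hg, ⟨rfl, rfl⟩, rfl⟩, hT⟩

section Hom

variable {H : Type*} [Group H] {T : MulTable} {ε : H → ℕ}

theorem iterate_mul_eq (hmul : ∀ x y, T.mul (ε x) (ε y) = ε (x * y)) (x y : H) (n : ℕ) :
    (T.mul · (ε x))^[n] (ε y) = ε (y * x ^ n) := by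
  induction n with
  | zero => simp
  | succ n ih => rw [Function.iterate_succ_apply', ih, hmul, pow_succ, mul_assoc]

theorem foldl_mul_map_eq (hmul : ∀ x y, T.mul (ε x) (ε y) = ε (x * y)) (l : List H) (y : H) :
    (l.map ε).foldl T.mul (ε y) = ε (y * l.prod) := by
  induction l generalizing y with
  | nil => simp
  | cons x l ih => rw [List.map_cons, List.foldl_cons, hmul, ih, List.prod_cons, mul_assoc]

theorem eval_eq_of_mul_eq [Finite H] (hcard : Nat.card H = T.1) (hone : ε 1 = 0)
    (hmul : ∀ x y, T.mul (ε x) (ε y) = ε (x * y)) {f : Fin m → H} {g : List ℕ}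
    (hg : ∀ i : Fin m, g.getD i 0 = ε (f i)) (w : List (Fin m × Bool)) :
    T.eval g w = ε (evalWord f w) := by
  have hinv (x : H) : T.inv (ε x) = ε x⁻¹ := by
    have hd : T.1 - 1 + 1 = Nat.card H := by have := Nat.card_pos (α := H); omega
    rw [inv, ← hone, iterate_mul_eq hmul, one_mul]
    exact congrArg ε (eq_inv_of_mul_eq_one_left (by rw [← pow_succ, hd, pow_card_eq_one']))
  have hfold := foldl_mul_map_eq hmul (w.map fun p => if p.2 then f p.1 else (f p.1)⁻¹) 1
  rw [one_mul, hone] at hfold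
  rw [eval, evalWord, ← hfold, List.map_map]
  congr 1
  refine List.map_congr_left fun ⟨i, b⟩ _ => ?_
  cases b <;> simp only [Function.comp_apply, Bool.false_eq_true, ↓reduceIte, hg, hinv]

end Hom

section OfFinite

variable {H : Type*} [Group H] {d : ℕ}

def ofEquiv (e : H ≃ Fin d) : MulTable :=
  (d, List.ofFn fun n : Fin (d * d) => (e (e.symm n.divNat * e.symm n.modNat) : ℕ))

theorem ofEquiv_mul (e : H ≃ Fin d) (x y : H) : (ofEquiv e).mul (e x) (e y) = e (x * y) := by
  have hidx : (e x : ℕ) * d + e y = finProdFinEquiv (e x, e y) := by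
    rw [finProdFinEquiv_apply_val]; ring
  have hlt : (finProdFinEquiv (e x, e y) : ℕ) < (ofEquiv e).2.length := by
    simpa [ofEquiv] using (finProdFinEquiv (e x, e y)).isLt
  have hdiv := finProdFinEquiv.symm_apply_apply (e x, e y)
  rw [finProdFinEquiv_symm_apply, Prod.mk.injEq] at hdiv
  rw [mul, show (ofEquiv e).1 = d from rfl, hidx, List.getD_eq_getElem _ _ hlt]
  simp only [ofEquiv, List.getElem_ofFn, Fin.eta, hdiv.1, hdiv.2, Equiv.symm_apply_apply]

theorem isGroup_ofEquiv (e : H ≃ Fin d) (he : (e 1 : ℕ) = 0) : (ofEquiv e).IsGroup := by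
  have hsurj : ∀ a < d, ∃ x, (e x : ℕ) = a := fun a ha => ⟨e.symm ⟨a, ha⟩, by simp⟩
  refine ⟨(e 1).pos, by simp [ofEquiv], by simp [ofEquiv, List.mem_ofFn], fun a ha => ?_⟩
  obtain ⟨x, rfl⟩ := hsurj a ha
  refine ⟨by rw [← he, ofEquiv_mul, one_mul], ⟨e x⁻¹, (e _).isLt, ?_⟩, fun b hb c hc => ?_⟩
  · rw [ofEquiv_mul, inv_mul_cancel, he]
  · obtain ⟨y, rfl⟩ := hsurj b hb
    obtain ⟨z, rfl⟩ := hsurj c hc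
    simp only [ofEquiv_mul, mul_assoc]

theorem exists_mem_groupTables_of_finite [Finite H] (f : Fin m → H) :
    ∃ c ∈ groupTables m (Nat.card H), ∀ w, c.1.eval c.2 w = 0 ↔ evalWord f w = 1 := by
  obtain ⟨e, he⟩ : ∃ e : H ≃ Fin (Nat.card H), (e 1 : ℕ) = 0 :=
    ⟨(Finite.equivFin H).trans (Equiv.swap (Finite.equivFin H 1) ⟨0, Nat.card_pos⟩), by simp⟩
  refine ⟨(ofEquiv e, List.ofFn fun i => (e (f i) : ℕ)),
    mem_groupTables.2 ⟨isGroup_ofEquiv e he, le_rfl, by simp, ?_⟩, fun w => ?_⟩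
  · simp [ofEquiv, List.mem_ofFn]
  · rw [eval_eq_of_mul_eq (ε := fun x => (e x : ℕ)) (f := f) rfl he (ofEquiv_mul e) (by simp) w,
      ← he, Fin.val_inj, e.apply_eq_iff_eq]

end OfFinite

section ToGroup

variable {T : MulTable}

theorem IsGroup.mul_lt (hT : T.IsGroup) {a b : ℕ} (ha : a < T.1) (hb : b < T.1) :
    T.mul a b < T.1 := by
  have hidx : a * T.1 + b < T.2.length := by rw [hT.2.1]; nlinarith
  rw [mul, List.getD_eq_getElem _ _ hidx]
  exact hT.2.2.1 _ (List.getElem_mem _)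

@[reducible] noncomputable def IsGroup.toGroup (hT : T.IsGroup) : Group {a // a < T.1} :=
  letI : Mul {a // a < T.1} := ⟨fun a b => ⟨T.mul a b, hT.mul_lt a.2 b.2⟩⟩
  letI : One {a // a < T.1} := ⟨⟨0, hT.1⟩⟩
  letI : Inv {a // a < T.1} :=
    ⟨fun a => ⟨(hT.2.2.2 a a.2).2.1.choose, (hT.2.2.2 a a.2).2.1.choose_spec.1⟩⟩
  Group.ofLeftAxioms (fun a b c => Subtype.ext ((hT.2.2.2 a a.2).2.2 b b.2 c c.2))
    (fun a => Subtype.ext (hT.2.2.2 a a.2).1)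
    (fun a => Subtype.ext (hT.2.2.2 a a.2).2.1.choose_spec.2)

theorem exists_finite_group_of_mem_groupTables {k : ℕ} {c : MulTable × List ℕ}
    (hc : c ∈ groupTables m k) :
    ∃ (H : Type) (_ : Group H) (_ : Finite H), Nat.card H ≤ k ∧
      ∃ f : Fin m → H, ∀ w, c.1.eval c.2 w = 0 ↔ evalWord f w = 1 := by
  obtain ⟨hT, hk, hlen, hg⟩ := mem_groupTables.1 hc
  let _ : Group {a // a < c.1.1} := hT.toGroup
  have hcard : Nat.card {a // a < c.1.1} = c.1.1 := by
    rw [← Nat.card_congr Fin.equivSubtype, Nat.card_eq_fintype_card, Fintype.card_fin]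
  have hval (i : Fin m) : c.2.getD i 0 < c.1.1 := by
    rw [List.getD_eq_getElem _ _ (hlen ▸ i.2)]
    exact hg _ (List.getElem_mem _)
  refine ⟨_, inferInstance, inferInstance, hcard.le.trans hk, fun i => ⟨_, hval i⟩, fun w => ?_⟩
  rw [eval_eq_of_mul_eq (ε := Subtype.val) (f := fun i => ⟨_, hval i⟩) hcard rfl
    (fun _ _ => rfl) (fun _ => rfl) w]
  exact ⟨fun h => Subtype.ext h, congrArg Subtype.val⟩

end ToGroup

end MulTable

section Depth

open MulTable

variable {G : Type*} [Group G] {m : ℕ} {X : Fin m → G}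

/-- McKinsey's correspondence. -/
theorem exists_normal_not_mem_iff_exists_mem_groupTables
    (hgen : Subgroup.closure (Set.range X) = ⊤) (k : ℕ) (w : List (Fin m × Bool)) :
    (∃ N : Subgroup G, N.Normal ∧ N.index ≠ 0 ∧ N.index ≤ k ∧ evalWord X w ∉ N) ↔
      ∃ c ∈ groupTables m k, (∀ u, evalWord X u = 1 → c.1.eval c.2 u = 0) ∧
        c.1.eval c.2 w ≠ 0 := by
  constructor
  · rintro ⟨N, hN, hN0, hNk, hw⟩
    have : Finite (G ⧸ N) := Nat.finite_of_card_ne_zero hN0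
    obtain ⟨c, hc, hcw⟩ := exists_mem_groupTables_of_finite fun i => QuotientGroup.mk' N (X i)
    have hmem (u : List (Fin m × Bool)) : c.1.eval c.2 u = 0 ↔ evalWord X u ∈ N := by
      rw [hcw, ← map_evalWord (QuotientGroup.mk' N), QuotientGroup.mk'_apply,
        QuotientGroup.eq_one_iff]
    obtain ⟨hT, hcard, hg⟩ := mem_groupTables.1 hc
    exact ⟨c, mem_groupTables.2 ⟨hT, hcard.trans hNk, hg⟩,
      fun u hu => (hmem u).2 (hu ▸ N.one_mem), fun h => hw ((hmem w).1 h)⟩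
  · rintro ⟨c, hc, hrel, hw⟩
    obtain ⟨H, _, _, hH, f, hf⟩ := exists_finite_group_of_mem_groupTables hc
    obtain ⟨N, hN, hN0, hNH, hwN⟩ := exists_normal_index_le_evalWord_not_mem hgen f
      (fun u hu => (hf u).1 (hrel u hu)) (fun h => hw ((hf w).2 h))
    exact ⟨N, hN, hN0, hNH.trans hH, hwN⟩

theorem lt_rfDepth_iff (hRF : ResiduallyFinite G) {g : G} (hg : g ≠ 1) {k : ℕ} :
    k < rfDepth g ↔ ¬∃ N : Subgroup G, N.Normal ∧ N.index ≠ 0 ∧ N.index ≤ k ∧ g ∉ N := by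
  obtain ⟨N, hN, hN0, hgN⟩ := hRF g hg
  have hS : {d : ℕ | d ≠ 0 ∧ ∃ N : Subgroup G, N.Normal ∧ g ∉ N ∧ N.index = d}.Nonempty :=
    ⟨N.index, hN0, N, hN, hgN, rfl⟩
  constructor
  · rintro hk ⟨N, hN, hN0, hNk, hgN⟩
    exact (hk.trans_le (Nat.sInf_le ⟨hN0, N, hN, hgN, rfl⟩)).not_ge hNk
  · intro h
    obtain ⟨h0, N, hN, hgN, hNd⟩ := Nat.sInf_mem hS
    by_contra! hk
    exact h ⟨N, hN, hNd ▸ h0, hNd ▸ hk, hgN⟩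

def RelationsImply (m k : ℕ) (P : List (Fin m × Bool) → Prop) (w : List (Fin m × Bool)) :
    Prop :=
  ∀ c ∈ groupTables m k, (∀ u, P u → c.1.eval c.2 u = 0) → c.1.eval c.2 w = 0

theorem lt_rhoDepth_iff (hgen : Subgroup.closure (Set.range X) = ⊤) (hRF : ResiduallyFinite G)
    (w : List (Fin m × Bool)) (k : ℕ) :
    k < rhoDepth X w ↔ evalWord X w = 1 ∧ k = 0 ∨
      evalWord X w ≠ 1 ∧ RelationsImply m k (fun u => evalWord X u = 1) w := by
  by_cases hw : evalWord X w = 1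
  · simp [rhoDepth, hw]
  · rw [rhoDepth, if_neg hw, lt_rfDepth_iff hRF hw,
      exists_normal_not_mem_iff_exists_mem_groupTables hgen]
    simp [RelationsImply, hw]

end Depth

theorem List.forall_mem_imp_iff_exists_list {β γ : Type*} {C : List γ} {P : β → Prop}
    {Q : γ → β → Prop} {S : γ → Prop} :
    (∀ c ∈ C, (∀ b, P b → Q c b) → S c) ↔
      ∃ L : List β, (∀ b ∈ L, P b) ∧ ∀ c ∈ C, (∀ b ∈ L, Q c b) → S c := by
  constructor
  · intro h
    induction C with
    | nil => exact ⟨[], by simp, by simp⟩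
    | cons c C ih =>
      obtain ⟨L, hLP, hL⟩ := ih fun c' hc' => h c' (List.mem_cons_of_mem _ hc')
      by_cases hc : S c
      · exact ⟨L, hLP, by simpa [hc] using hL⟩
      · obtain ⟨b, hb, hQ⟩ : ∃ b, P b ∧ ¬Q c b := by
          by_contra! hQ
          exact hc (h c List.mem_cons_self hQ)
        refine ⟨b :: L, by simpa [hb] using hLP, ?_⟩
        simp only [List.mem_cons, forall_eq_or_imp]
        exact ⟨fun hQ' => absurd hQ'.1 hQ, fun c' hc' hQ' => hL c' hc' hQ'.2⟩
  · rintro ⟨L, hLP, hL⟩ c hc hQ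
    exact hL c hc fun b hb => hQ b (hLP b hb)

theorem relationsImply_iff_exists_list {m k : ℕ} {R : List (Fin m × Bool) → ℕ → Prop}
    {w : List (Fin m × Bool)} :
    RelationsImply m k (fun u => ∃ s, R u s) w ↔
      ∃ L : List (List (Fin m × Bool) × ℕ), (∀ p ∈ L, R p.1 p.2) ∧
        RelationsImply m k (· ∈ L.map Prod.fst) w := by
  simp only [RelationsImply, List.forall_mem_map, forall_exists_index]
  simpa only [Prod.forall] using List.forall_mem_imp_iff_exists_list (C := MulTable.groupTables m k)
    (P := fun p : _ × ℕ => R p.1 p.2) (Q := fun c p => c.1.eval c.2 p.1 = 0)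
    (S := fun c => c.1.eval c.2 w = 0)

section Computability

variable {α β : Type*} [Primcodable α] [Primcodable β]

open Nat.Partrec.Code in
/-- Here `s` bounds the number of steps of a semi-decision procedure for `p`. -/
theorem REPred.exists_primrecRel {p : α → Prop} (hp : REPred p) :
    ∃ R : α → ℕ → Prop, PrimrecRel R ∧ ∀ a, p a ↔ ∃ s, R a s := by
  obtain ⟨c, hc⟩ := exists_code.1 hp
  refine ⟨fun a s => (evaln s c (Encodable.encode a)).isSome, ?_, fun a => ?_⟩
  · exact Primrec.eq.comp (Primrec.option_isSome.comp (primrec_evaln.comp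
      ((Primrec.snd.pair (Primrec.const c)).pair (Primrec.encode.comp Primrec.fst))))
      (Primrec.const true)
  have hdom : p a ↔ (eval c (Encodable.encode a)).Dom := by
    simp [hc, Encodable.encodek, Part.assert]
  simp only [hdom, Part.dom_iff_mem, evaln_complete, Option.isSome_iff_exists, Option.mem_def]
  exact exists_comm

theorem REPred.exists_of_computablePred {R : α → β → Prop}
    (hR : ComputablePred fun x : α × β => R x.1 x.2) : REPred fun a => ∃ b, R a b := by
  classical
  have hsearch : Computable₂ fun a n =>
      ((Encodable.decode (α := β) n).map fun b => decide (R a b)).getD false :=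
    Computable.option_getD (Computable.option_map (Computable.decode.comp Computable.snd)
      (hR.decide.comp ((Computable.fst.comp Computable.fst).pair Computable.snd)).to₂)
      (Computable.const false)
  refine (Partrec.rfind hsearch.partrec₂).dom_re.of_eq fun a => ?_
  simp only [Nat.rfind_dom, PFun.coe_val, Part.mem_some_iff, Part.some_dom, implies_true,
    and_true]
  constructor
  · rintro ⟨n, hn⟩
    cases hb : Encodable.decode (α := β) n with
    | none => simp [hb] at hn
    | some b => exact ⟨b, by simpa [hb] using hn⟩
  · rintro ⟨b, hb⟩
    exact ⟨Encodable.encode b, by simp [Encodable.encodek, hb]⟩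

end Computability

section PrimrecTables

open Primrec MulTable

variable {α : Type*} [Primcodable α] {m : ℕ}

/-- Mathlib's `PrimrecRel.forall_lt` requires the parameter to be a natural number. -/
theorem PrimrecRel.forall_lt' {β : Type*} [Primcodable β] {R : ℕ → β → Prop}
    (hR : PrimrecRel R) : PrimrecRel fun n b => ∀ x < n, R x b :=
  (hR.forall_mem_list.comp (list_range.comp fst) snd).of_eq fun _ => by simp

theorem PrimrecRel.exists_lt' {β : Type*} [Primcodable β] {R : ℕ → β → Prop}
    (hR : PrimrecRel R) : PrimrecRel fun n b => ∃ x < n, R x b :=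
  (hR.exists_mem_list.comp (list_range.comp fst) snd).of_eq fun _ => by simp

theorem primrec_tuples : Primrec₂ tuples :=
  (nat_rec' snd (const [[]]) (list_flatMap (list_range.comp (fst.comp fst))
    (list_map (snd.comp (snd.comp fst)) (list_cons.comp (snd.comp fst) snd).to₂).to₂).to₂).of_eq
    fun ⟨b, n⟩ => by induction n <;> simp [tuples, *]

theorem Primrec.mulTable_mul {f : α → MulTable} {g h : α → ℕ} (hf : Primrec f)
    (hg : Primrec g) (hh : Primrec h) : Primrec fun a => (f a).mul (g a) (h a) :=
  (list_getD 0).comp (snd.comp hf) (nat_add.comp (nat_mul.comp hg (fst.comp hf)) hh)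

theorem Primrec.mulTable_inv {f : α → MulTable} {g : α → ℕ} (hf : Primrec f) (hg : Primrec g) :
    Primrec fun a => (f a).inv (g a) :=
  nat_iterate (nat_sub.comp (fst.comp hf) (const 1)) (const 0)
    (mulTable_mul (hf.comp fst) snd (hg.comp fst)).to₂

theorem Primrec.mulTable_eval {f : α → MulTable} {g : α → List ℕ}
    {w : α → List (Fin m × Bool)} (hf : Primrec f) (hg : Primrec g) (hw : Primrec w) :
    Primrec fun a => (f a).eval (g a) (w a) := by
  have hval : Primrec₂ fun a (p : Fin m × Bool) => (g a).getD p.1 0 :=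
    (list_getD 0).comp (hg.comp fst) (fin_val.comp (fst.comp snd))
  have hletter : Primrec₂ fun a (p : Fin m × Bool) =>
      if p.2 then (g a).getD p.1 0 else (f a).inv ((g a).getD p.1 0) :=
    ite (Primrec.eq.comp (snd.comp snd) (const true)) hval (mulTable_inv (hf.comp fst) hval)
  exact list_foldl (list_map hw hletter) (const 0)
    (mulTable_mul (hf.comp fst) (fst.comp snd) (snd.comp snd)).to₂

theorem primrecPred_isGroup : PrimrecPred IsGroup := by
  have hassoc : PrimrecRel fun (c : ℕ) (y : ℕ × ℕ × MulTable) =>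
      y.2.2.mul (y.2.2.mul y.2.1 y.1) c = y.2.2.mul y.2.1 (y.2.2.mul y.1 c) := by
    have hT : Primrec fun z : ℕ × ℕ × ℕ × MulTable => z.2.2.2 := snd.comp (snd.comp snd)
    have ha : Primrec fun z : ℕ × ℕ × ℕ × MulTable => z.2.2.1 := fst.comp (snd.comp snd)
    have hb : Primrec fun z : ℕ × ℕ × ℕ × MulTable => z.2.1 := fst.comp snd
    exact Primrec.eq.comp (mulTable_mul hT (mulTable_mul hT ha hb) fst)
      (mulTable_mul hT ha (mulTable_mul hT hb fst))
  have hassoc' : PrimrecRel fun (b : ℕ) (x : ℕ × MulTable) =>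
      ∀ c < x.2.1, x.2.mul (x.2.mul x.1 b) c = x.2.mul x.1 (x.2.mul b c) :=
    hassoc.forall_lt'.comp (fst.comp (snd.comp snd)) .id
  have hinv : PrimrecRel fun (b : ℕ) (x : ℕ × MulTable) => x.2.mul b x.1 = 0 :=
    Primrec.eq.comp (mulTable_mul (snd.comp snd) fst (fst.comp snd)) (const 0)
  have haxioms : PrimrecRel fun (a : ℕ) (T : MulTable) =>
      T.mul 0 a = a ∧ (∃ b < T.1, T.mul b a = 0) ∧
        ∀ b < T.1, ∀ c < T.1, T.mul (T.mul a b) c = T.mul a (T.mul b c) :=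
    (Primrec.eq.comp (mulTable_mul snd (const 0) fst) fst).and
      ((hinv.exists_lt'.comp (fst.comp snd) .id).and (hassoc'.forall_lt'.comp (fst.comp snd) .id))
  have hlt : PrimrecRel fun (x : ℕ) (T : MulTable) => x < T.1 := nat_lt.comp fst (fst.comp snd)
  exact (nat_lt.comp (const 0) fst).and ((Primrec.eq.comp (list_length.comp snd)
    (nat_mul.comp fst fst)).and ((hlt.forall_mem_list.comp snd .id).and
      (haxioms.forall_lt'.comp fst .id)))

theorem primrec_groupTables (m : ℕ) : Primrec (groupTables m) := by
  have hmark : Primrec₂ fun (x : (ℕ × ℕ) × List ℕ) (g : List ℕ) => ((x.1.2, x.2), g) :=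
    ((snd.comp (fst.comp fst)).pair (snd.comp fst)).pair snd
  have htables : Primrec₂ fun (_ d : ℕ) => (tuples d (d * d)).flatMap fun t =>
      (tuples d m).map fun g => (((d, t) : MulTable), g) :=
    list_flatMap (primrec_tuples.comp snd (nat_mul.comp snd snd))
      (list_map (primrec_tuples.comp (snd.comp fst) (const m)) hmark).to₂
  exact (listFilter (primrecPred_isGroup.comp fst)).comp
    (list_flatMap (list_range.comp succ) htables)

theorem PrimrecPred.relationsImply {k : α → ℕ} {L : α → List (List (Fin m × Bool))}
    {w : α → List (Fin m × Bool)} (hk : Primrec k) (hL : Primrec L) (hw : Primrec w) :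
    PrimrecPred fun a => RelationsImply m (k a) (· ∈ L a) (w a) := by
  have hrel : PrimrecRel fun (u : List (Fin m × Bool)) (x : (MulTable × List ℕ) × α) =>
      x.1.1.eval x.1.2 u = 0 :=
    Primrec.eq.comp (mulTable_eval (fst.comp (fst.comp snd)) (snd.comp (fst.comp snd)) fst)
      (const 0)
  have hkill : PrimrecRel fun (c : MulTable × List ℕ) a => c.1.eval c.2 (w a) = 0 :=
    Primrec.eq.comp (mulTable_eval (fst.comp fst) (snd.comp fst) (hw.comp snd)) (const 0)
  have himp : PrimrecRel fun (c : MulTable × List ℕ) a =>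
      (∀ u ∈ L a, c.1.eval c.2 u = 0) → c.1.eval c.2 (w a) = 0 :=
    ((hrel.forall_mem_list.comp (hL.comp snd) .id).not.or hkill).of_eq fun _ =>
      imp_iff_not_or.symm
  exact himp.forall_mem_list.comp ((primrec_groupTables m).comp hk) .id

end PrimrecTables

section Certificate

open Primrec

variable {m : ℕ}

/-- A witness `(s, L)` for `k < ρ(w)`: `R₀` and `R₁` semi-decide `w ≠ 1` and `w = 1` within `s`
steps, and each relator in `L` carries its own step bound. -/
def DepthCertificate (R₀ R₁ : List (Fin m × Bool) → ℕ → Prop) (x : List (Fin m × Bool) × ℕ)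
    (c : ℕ × List (List (Fin m × Bool) × ℕ)) : Prop :=
  R₁ x.1 c.1 ∧ x.2 = 0 ∨
    R₀ x.1 c.1 ∧ (∀ p ∈ c.2, R₁ p.1 p.2) ∧ RelationsImply m x.2 (· ∈ c.2.map Prod.fst) x.1

theorem primrecRel_depthCertificate {R₀ R₁ : List (Fin m × Bool) → ℕ → Prop}
    (hR₀ : PrimrecRel R₀) (hR₁ : PrimrecRel R₁) : PrimrecRel (DepthCertificate R₀ R₁) := by
  have hrel : PrimrecRel fun (p : List (Fin m × Bool) × ℕ)
      (_ : (List (Fin m × Bool) × ℕ) × ℕ × List (List (Fin m × Bool) × ℕ)) => R₁ p.1 p.2 :=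
    PrimrecPred.comp hR₁ fst
  exact ((hR₁.comp (fst.comp fst) (fst.comp snd)).and (Primrec.eq.comp (snd.comp fst) (const 0))).or
    ((hR₀.comp (fst.comp fst) (fst.comp snd)).and
      ((hrel.forall_mem_list.comp (snd.comp snd) .id).and
        (PrimrecPred.relationsImply (snd.comp fst) (list_map (snd.comp snd) (fst.comp snd).to₂)
          (fst.comp fst))))

theorem lt_rhoDepth_iff_exists_depthCertificate {G : Type*} [Group G] {X : Fin m → G}
    (hgen : Subgroup.closure (Set.range X) = ⊤) (hRF : ResiduallyFinite G)
    {R₀ R₁ : List (Fin m × Bool) → ℕ → Prop} (h₀ : ∀ u, evalWord X u ≠ 1 ↔ ∃ s, R₀ u s)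
    (h₁ : ∀ u, evalWord X u = 1 ↔ ∃ s, R₁ u s) (x : List (Fin m × Bool) × ℕ) :
    x.2 < rhoDepth X x.1 ↔ ∃ c, DepthCertificate R₀ R₁ x c := by
  rw [lt_rhoDepth_iff hgen hRF, h₀]
  simp_rw [h₁]
  rw [relationsImply_iff_exists_list]
  constructor
  · rintro (⟨⟨s, hs⟩, hk⟩ | ⟨⟨s, hs⟩, L, hL, hwL⟩)
    · exact ⟨(s, []), .inl ⟨hs, hk⟩⟩
    · exact ⟨(s, L), .inr ⟨hs, hL, hwL⟩⟩
  · rintro ⟨⟨s, L⟩, ⟨hs, hk⟩ | ⟨hs, hL, hwL⟩⟩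
    · exact .inl ⟨⟨s, hs⟩, hk⟩
    · exact .inr ⟨⟨s, hs⟩, L, hL, hwL⟩

end Certificate

theorem rho_leftComputable_of_decidable_wp_general {G : Type*} [Group G] {m : ℕ}
    (X : Fin m → G) (hgen : Subgroup.closure (Set.range X) = ⊤)
    (hRF : ResiduallyFinite G)
    (hwp : ComputablePred (fun w : List (Fin m × Bool) => evalWord X w = 1)) :
    LeftComputable (rhoDepth X) := by
  obtain ⟨R₀, hR₀, h₀⟩ := hwp.not.to_re.exists_primrecRel
  obtain ⟨R₁, hR₁, h₁⟩ := hwp.to_re.exists_primrecRel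
  exact (REPred.exists_of_computablePred (primrecRel_depthCertificate hR₀ hR₁).computablePred).of_eq
    fun x => (lt_rhoDepth_iff_exists_depthCertificate hgen hRF h₀ h₁ x).symm

/-- 'only if' direction of Theorem 1.4. Let `G = ⟨X⟩` be a
finitely generated residually finite group with recursively enumerable
presentation (i.e. the words representing `1` form an r.e. set) and decidable
word problem. Then the individual residual finiteness depth function `ρ` is
left-computable: `{ (w,k) : ρ(w) > k }` is recursively enumerable. -/
theorem rho_leftComputable_of_decidable_wp {G : Type*} [Group G] {m : ℕ}
    (X : Fin m → G) (hgen : Subgroup.closure (Set.range X) = ⊤)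
    (hRF : ResiduallyFinite G)
    (hre : REPred (fun w : List (Fin m × Bool) => evalWord X w = 1))
    (hwp : ComputablePred (fun w : List (Fin m × Bool) => evalWord X w = 1)) :
    LeftComputable (rhoDepth X) :=
  rho_leftComputable_of_decidable_wp_general X hgen hRF hwp
end
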